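/- arXiv:2403.06640 — 4 statements merged into one kernel-verified Lean document; each statement's English description precedes it below -/
import Mathlib

section
/- Let g_0, ..., g_{m-1} be real with |g_k| ≤ ρ_0 ρ^k for all k, where ρ_0 > 0 and 0 < ρ ≤ 1 (in the case ρ < 1; for ρ = 1 interpret the geometric sum as m·ρ_0). Let f(θ) = Σ_{k=0}^{m-1} g_k cos(kθ) and M ≥ 2 a natural number. If f(qπ/M) ≥ ε for all q ∈ {0,...,M}, where ε = π ρ_0 (1−ρ^m)/(1−ρ) · (m−1)/(2M), then f(θ) ≥ 0 for all θ ∈ [0, π]. -/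
/-!
The cosine polynomial `f θ = ∑ g_k cos (kθ)` is Lipschitz with constant
`(m - 1) ∑ |g_k| ≤ (m - 1) ρ₀ (1 - ρ^m) / (1 - ρ)`, and every `θ ∈ [0, π]` lies within
`π / (2M)` of a sample point `qπ/M`. So `f` drops by at most the margin `ε` between
samples, and `f (qπ/M) ≥ ε` forces `f θ ≥ 0`.
-/

open Finset Real

lemma exists_nat_le_abs_sub_le_half {x : ℝ} {N : ℕ} (hx₀ : 0 ≤ x) (hxN : x ≤ N) :
    ∃ q : ℕ, q ≤ N ∧ |x - q| ≤ 1 / 2 := by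
  have hfloor_le := Nat.floor_le (a := x + 1 / 2) (by linarith)
  have hlt_floor := Nat.lt_floor_add_one (x + 1 / 2)
  refine ⟨⌊x + 1 / 2⌋₊, ?_, abs_le.mpr ⟨by linarith, by linarith⟩⟩
  have : (⌊x + 1 / 2⌋₊ : ℝ) < N + 1 := by linarith
  exact_mod_cast Nat.lt_add_one_iff.mp (by exact_mod_cast this)

lemma exists_nat_le_abs_sub_mul_pi_div_le {θ : ℝ} (hθ : θ ∈ Set.Icc 0 π) {M : ℕ} (hM : 0 < M) :
    ∃ q : ℕ, q ≤ M ∧ |θ - q * π / M| ≤ π / (2 * M) := by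
  have hMR : (0 : ℝ) < M := by exact_mod_cast hM
  obtain ⟨hθ₀, hθπ⟩ := hθ
  obtain ⟨q, hqM, hq⟩ := exists_nat_le_abs_sub_le_half (x := θ * M / π) (N := M)
    (by positivity) (by rw [div_le_iff₀ pi_pos]; nlinarith)
  refine ⟨q, hqM, ?_⟩
  have hscale : θ - q * π / M = (θ * M / π - q) * (π / M) := by field_simp
  calc |θ - q * π / M| = |θ * M / π - q| * (π / M) := by
        rw [hscale, abs_mul, abs_of_pos (by positivity : 0 < π / M)]
    _ ≤ 1 / 2 * (π / M) := by gcongr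
    _ = π / (2 * M) := by ring

lemma abs_sum_mul_cos_sub_le {m : ℕ} {g b : Fin m → ℝ} (hgb : ∀ k, |g k| ≤ b k)
    {θ φ δ : ℝ} (hθφ : |θ - φ| ≤ δ) :
    |∑ k, g k * cos (k * θ) - ∑ k, g k * cos (k * φ)| ≤ ((m : ℝ) - 1) * δ * ∑ k, b k := by
  rw [← sum_sub_distrib, mul_sum]
  refine (abs_sum_le_sum_abs _ _).trans (sum_le_sum fun k _ => ?_)
  have hb : 0 ≤ b k := (abs_nonneg _).trans (hgb k)
  have hk : (k : ℝ) ≤ m - 1 := by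
    have : (k : ℝ) + 1 ≤ m := by exact_mod_cast k.isLt
    linarith
  calc |g k * cos (k * θ) - g k * cos (k * φ)|
      = |g k| * |cos (k * θ) - cos (k * φ)| := by rw [← mul_sub, abs_mul]
    _ ≤ b k * (k * |θ - φ|) := by
        gcongr
        · exact hgb k
        · calc |cos (k * θ) - cos (k * φ)| ≤ |k * θ - k * φ| := abs_cos_sub_cos_le _ _
            _ = k * |θ - φ| := by rw [← mul_sub, abs_mul, Nat.abs_cast]
    _ ≤ b k * ((m - 1) * δ) := by
        have : 0 ≤ δ := (abs_nonneg _).trans hθφ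
        have : (0 : ℝ) ≤ m - 1 := (Nat.cast_nonneg _).trans hk
        gcongr
    _ = (m - 1) * δ * b k := by ring

lemma sum_fin_geom_eq {ρ : ℝ} (hρ : ρ ≠ 1) (m : ℕ) :
    ∑ k : Fin m, ρ ^ (k : ℕ) = (1 - ρ ^ m) / (1 - ρ) := by
  rw [Fin.sum_univ_eq_sum_range (ρ ^ ·), geom_sum_eq hρ, ← neg_div_neg_eq, neg_sub, neg_sub]

theorem stmt_1_general (m M : ℕ) (hM : 2 ≤ M) (g : Fin m → ℝ) (ρ₀ ρ : ℝ)
    (hρ1 : ρ < 1)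
    (hg : ∀ k : Fin m, |g k| ≤ ρ₀ * ρ ^ (k : ℕ))
    (hsample : ∀ q : ℕ, q ≤ M →
      Real.pi * ρ₀ * (1 - ρ ^ m) / (1 - ρ) * (((m : ℝ) - 1) / (2 * M)) ≤
        ∑ k : Fin m, g k * Real.cos ((k : ℝ) * ((q : ℝ) * Real.pi / M))) :
    ∀ θ ∈ Set.Icc (0 : ℝ) Real.pi,
      0 ≤ ∑ k : Fin m, g k * Real.cos ((k : ℝ) * θ) := by
  intro θ hθ
  obtain ⟨q, hqM, hclose⟩ := exists_nat_le_abs_sub_mul_pi_div_le hθ (by omega : 0 < M)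
  have hvar := abs_sum_mul_cos_sub_le hg hclose
  rw [← mul_sum, sum_fin_geom_eq hρ1.ne] at hvar
  have hε : π * ρ₀ * (1 - ρ ^ m) / (1 - ρ) * (((m : ℝ) - 1) / (2 * M)) =
      ((m : ℝ) - 1) * (π / (2 * M)) * (ρ₀ * ((1 - ρ ^ m) / (1 - ρ))) := by ring
  linarith [(abs_le.mp hvar).1, hsample q hqM]

/-- Sampled positivity with margin ε implies nonnegativity of
`f θ = Σ g_k cos(kθ)` on [0,π], under geometric decay of coefficients. -/
theorem stmt_1 (m M : ℕ) (hM : 2 ≤ M) (g : Fin m → ℝ) (ρ₀ ρ : ℝ)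
    (hρ₀ : 0 < ρ₀) (hρ : 0 < ρ) (hρ1 : ρ < 1)
    (hg : ∀ k : Fin m, |g k| ≤ ρ₀ * ρ ^ (k : ℕ))
    (hsample : ∀ q : ℕ, q ≤ M →
      Real.pi * ρ₀ * (1 - ρ ^ m) / (1 - ρ) * (((m : ℝ) - 1) / (2 * M)) ≤
        ∑ k : Fin m, g k * Real.cos ((k : ℝ) * ((q : ℝ) * Real.pi / M))) :
    ∀ θ ∈ Set.Icc (0 : ℝ) Real.pi,
      0 ≤ ∑ k : Fin m, g k * Real.cos ((k : ℝ) * θ) :=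
  stmt_1_general m M hM g ρ₀ ρ hρ1 hg hsample
end

section
/- Let T_n (n ≥ 1) be the n×n symmetric banded Toeplitz matrices with symbol f(θ) = t_0 + 2 Σ_{k=1}^{m-1} t_k cos(kθ), where t_0, ..., t_{m-1} are fixed real numbers. Then the smallest eigenvalue λ_min(T_n) is nonincreasing in n and converges as n → ∞ to inf_{θ ∈ [0, 2π]} f(θ). -/
/-!
Two Rayleigh-quotient estimates squeeze `λ_min(T_n)` against `min f`. Writing
`P_v(θ) = ∑ⱼ vⱼ e^{ijθ}`, orthogonality of the characters on `[0, 2π]` gives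
`2π ⟪v, T v⟫ = ∫ f |P_v|²` and `2π ⟪v, v⟫ = ∫ |P_v|²`, so `⟪v, T v⟫ ≥ (min f) ⟪v, v⟫`.
Conversely, the test vector `(e^{ijθ₀})_{j<N}` at a minimiser `θ₀` of `f` has Rayleigh
numerator `N f(θ₀) + O(1)`, since adding a row and a column to `T_N` adds exactly one full
period of the symbol once `N ≥ m - 1`. Monotonicity holds because `T_n` is a principal
submatrix of `T_{n+1}`.
-/

open Finset Matrix

/-- The `n×n` symmetric banded Toeplitz matrix with entries `t_{|i−j|}`
(for `|i−j| ≤ m−1`, zero otherwise). -/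
def bandToeplitz (m n : ℕ) (t : ℕ → ℝ) : Matrix (Fin n) (Fin n) ℝ :=
  Matrix.of fun i j =>
    if Nat.dist (i : ℕ) (j : ℕ) ≤ m - 1 then t (Nat.dist (i : ℕ) (j : ℕ)) else 0

open Real Filter Topology

namespace Matrix

variable {ι : Type*} [Fintype ι]

def realEigenvalues (A : Matrix ι ι ℝ) : Set ℝ :=
  {r | ∃ v : ι → ℝ, v ≠ 0 ∧ A *ᵥ v = r • v}

theorem IsHermitian.mul_dotProduct_self_le_of_mem_lowerBounds [DecidableEq ι]
    {A : Matrix ι ι ℝ} (hA : A.IsHermitian) {c : ℝ}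
    (hc : c ∈ lowerBounds A.realEigenvalues) (v : ι → ℝ) :
    c * (v ⬝ᵥ v) ≤ v ⬝ᵥ A *ᵥ v := by
  have hB : (A - c • 1).IsHermitian := hA.sub (isHermitian_one.smul (IsSelfAdjoint.all c))
  have hpsd : (A - c • 1).PosSemidef := by
    refine hB.posSemidef_iff_eigenvalues_nonneg.mpr fun i => ?_
    have hw : A *ᵥ ⇑(hB.eigenvectorBasis i)
        = (hB.eigenvalues i + c) • ⇑(hB.eigenvectorBasis i) := by
      have := hB.mulVec_eigenvectorBasis i
      rw [sub_mulVec, smul_mulVec, one_mulVec, sub_eq_iff_eq_add] at this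
      rw [this, add_smul]
    have hne : ⇑(hB.eigenvectorBasis i) ≠ 0 := fun h0 =>
      hB.eigenvectorBasis.orthonormal.ne_zero i (by ext j; exact congrFun h0 j)
    have := hc ⟨_, hne, hw⟩
    simp only [Pi.zero_apply]
    linarith
  have := hpsd.dotProduct_mulVec_nonneg v
  simp only [star_trivial, sub_mulVec, smul_mulVec, one_mulVec, dotProduct_sub,
    dotProduct_smul, smul_eq_mul] at this
  linarith

theorem le_of_mem_realEigenvalues {A : Matrix ι ι ℝ} {c r : ℝ}
    (hc : ∀ v, c * (v ⬝ᵥ v) ≤ v ⬝ᵥ A *ᵥ v) (hr : r ∈ A.realEigenvalues) : c ≤ r := by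
  obtain ⟨v, hv, hAv⟩ := hr
  have hpos : 0 < v ⬝ᵥ v := by simpa using dotProduct_star_self_pos_iff.mpr hv
  have := hc v
  rw [hAv, dotProduct_smul, smul_eq_mul] at this
  exact le_of_mul_le_mul_right this hpos

theorem dotProduct_mulVec_snoc_zero {R : Type*} [NonUnitalNonAssocSemiring R] {N : ℕ}
    (A : Matrix (Fin (N + 1)) (Fin (N + 1)) R) (v : Fin N → R) :
    Fin.snoc v 0 ⬝ᵥ A *ᵥ Fin.snoc v 0 = v ⬝ᵥ A.submatrix Fin.castSucc Fin.castSucc *ᵥ v := by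
  simp [dotProduct, mulVec, Fin.sum_univ_castSucc]

theorem snoc_zero_dotProduct_snoc_zero {R : Type*} [NonUnitalNonAssocSemiring R] {N : ℕ}
    (v : Fin N → R) :
    (Fin.snoc v 0 : Fin (N + 1) → R) ⬝ᵥ Fin.snoc v 0 = v ⬝ᵥ v := by
  simp [dotProduct, Fin.sum_univ_castSucc]

theorem cos_dotProduct_add_sin_dotProduct {N : ℕ} (A : Matrix (Fin N) (Fin N) ℝ) (θ : ℝ) :
    (fun j : Fin N => cos (j * θ)) ⬝ᵥ A *ᵥ (fun j => cos (j * θ))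
      + (fun j : Fin N => sin (j * θ)) ⬝ᵥ A *ᵥ (fun j => sin (j * θ))
      = ∑ j, ∑ k, A j k * cos (((j : ℤ) - k : ℤ) * θ) := by
  simp only [dotProduct, mulVec, mul_sum, ← sum_add_distrib]
  refine sum_congr rfl fun j _ => sum_congr rfl fun k _ => ?_
  push_cast
  rw [sub_mul, cos_sub]
  ring

end Matrix

theorem sum_range_sub_eq_sum_Icc {M : Type*} [AddCommMonoid M] (g : ℤ → M) (N : ℕ) :
    ∑ k ∈ range N, g ((N : ℤ) - k) = ∑ d ∈ Icc 1 N, g d := by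
  refine sum_nbij' (fun k => N - k) (fun d => N - d) ?_ ?_ ?_ ?_ ?_ <;>
    intro a ha <;> simp only [mem_range, mem_Icc] at ha ⊢
  all_goals first | omega | (congr 1; omega)

theorem sum_range_sum_range_succ_of_even {M : Type*} [AddCommMonoid M] {g : ℤ → M}
    (hg : g.Even) (N : ℕ) :
    ∑ j ∈ range (N + 1), ∑ k ∈ range (N + 1), g ((j : ℤ) - k)
      = ∑ j ∈ range N, ∑ k ∈ range N, g ((j : ℤ) - k) + (g 0 + 2 • ∑ d ∈ Icc 1 N, g d) := by
  have hcol : ∑ j ∈ range N, g ((j : ℤ) - N) = ∑ d ∈ Icc 1 N, g d := by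
    rw [← sum_range_sub_eq_sum_Icc]
    exact sum_congr rfl fun j _ => by rw [← hg, neg_sub]
  simp only [sum_range_succ, sum_add_distrib, hcol, sum_range_sub_eq_sum_Icc, sub_self]
  abel

theorem integral_cos_intCast_mul (a : ℤ) :
    ∫ θ in (0)..(2 * π), cos (a * θ) = if a = 0 then 2 * π else 0 := by
  split_ifs with ha
  · simp [ha]
  · have ha' : (a : ℝ) ≠ 0 := by exact_mod_cast ha
    have h2a : (a : ℝ) * (2 * π) = ((2 * a : ℤ) : ℝ) * π := by push_cast; ring
    rw [intervalIntegral.integral_comp_mul_left (fun x => cos x) ha', integral_cos, h2a,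
      sin_int_mul_pi]
    simp

noncomputable def trigNormSq {N : ℕ} (v : Fin N → ℝ) (θ : ℝ) : ℝ :=
  ∑ j, ∑ k, v j * v k * cos (((j : ℤ) - k : ℤ) * θ)

theorem trigNormSq_eq {N : ℕ} (v : Fin N → ℝ) (θ : ℝ) :
    trigNormSq v θ = (∑ j, v j * cos (j * θ)) ^ 2 + (∑ j, v j * sin (j * θ)) ^ 2 := by
  simp only [trigNormSq, sq, sum_mul_sum, ← sum_add_distrib]
  refine sum_congr rfl fun j _ => sum_congr rfl fun k _ => ?_
  push_cast
  rw [sub_mul, cos_sub]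
  ring

theorem trigNormSq_nonneg {N : ℕ} (v : Fin N → ℝ) (θ : ℝ) : 0 ≤ trigNormSq v θ := by
  rw [trigNormSq_eq]
  positivity

theorem continuous_trigNormSq {N : ℕ} (v : Fin N → ℝ) : Continuous (trigNormSq v) := by
  unfold trigNormSq
  fun_prop

theorem integral_mul_trigNormSq {g : ℝ → ℝ} (hg : Continuous g) {N : ℕ} (v : Fin N → ℝ) :
    ∫ θ in (0)..(2 * π), g θ * trigNormSq v θ
      = ∑ j, ∑ k, v j * v k * ∫ θ in (0)..(2 * π), g θ * cos (((j : ℤ) - k : ℤ) * θ) := by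
  simp_rw [trigNormSq, mul_sum]
  rw [intervalIntegral.integral_finsetSum fun _ _ =>
    (by fun_prop : Continuous _).intervalIntegrable _ _]
  refine sum_congr rfl fun j _ => ?_
  rw [intervalIntegral.integral_finsetSum fun _ _ =>
    (by fun_prop : Continuous _).intervalIntegrable _ _]
  refine sum_congr rfl fun k _ => ?_
  rw [← intervalIntegral.integral_const_mul]
  simp_rw [mul_left_comm]

theorem integral_trigNormSq {N : ℕ} (v : Fin N → ℝ) :
    ∫ θ in (0)..(2 * π), trigNormSq v θ = 2 * π * (v ⬝ᵥ v) := by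
  have h := integral_mul_trigNormSq (g := fun _ => 1) continuous_const v
  simp only [one_mul] at h
  simp_rw [h, integral_cos_intCast_mul, sub_eq_zero, Nat.cast_inj, Fin.val_inj]
  simp only [dotProduct, mul_sum]
  exact sum_congr rfl fun j _ => by
    simp only [mul_ite, mul_zero, sum_ite_eq, mem_univ, ↓reduceIte]; ring

-- The entry of `bandToeplitz m N t` on the diagonal `i - j = a`; in these terms
-- `bandSymbol m t θ = ∑ a, bandCoeff m t a * cos (a * θ)`.
noncomputable def bandCoeff (m : ℕ) (t : ℕ → ℝ) (a : ℤ) : ℝ :=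
  if a.natAbs ≤ m - 1 then t a.natAbs else 0

noncomputable def bandSymbol (m : ℕ) (t : ℕ → ℝ) (θ : ℝ) : ℝ :=
  t 0 + 2 * ∑ k ∈ Icc 1 (m - 1), t k * cos (k * θ)

noncomputable def bandQuadSum (m : ℕ) (t : ℕ → ℝ) (θ : ℝ) (N : ℕ) : ℝ :=
  ∑ j ∈ range N, ∑ k ∈ range N, bandCoeff m t ((j : ℤ) - k) * cos (((j : ℤ) - k : ℤ) * θ)

section Band

variable (m : ℕ) (t : ℕ → ℝ)

theorem bandToeplitz_apply {N : ℕ} (i j : Fin N) :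
    bandToeplitz m N t i j = bandCoeff m t ((i : ℤ) - j) := by
  have : Nat.dist i j = ((i : ℤ) - j).natAbs := by unfold Nat.dist; omega
  simp [bandToeplitz, bandCoeff, this]

theorem bandToeplitz_submatrix_castSucc (N : ℕ) :
    (bandToeplitz m (N + 1) t).submatrix Fin.castSucc Fin.castSucc = bandToeplitz m N t :=
  rfl

theorem isHermitian_bandToeplitz (N : ℕ) : (bandToeplitz m N t).IsHermitian := by
  ext i j
  simp [bandToeplitz, Nat.dist_comm]

theorem bandCoeff_neg (a : ℤ) : bandCoeff m t (-a) = bandCoeff m t a := by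
  simp [bandCoeff]

theorem bandCoeff_natCast (d : ℕ) : bandCoeff m t d = if d ≤ m - 1 then t d else 0 := by
  simp [bandCoeff]

theorem continuous_bandSymbol : Continuous (bandSymbol m t) := by
  unfold bandSymbol
  fun_prop

theorem bandSymbol_mul_cos (a : ℤ) (θ : ℝ) :
    bandSymbol m t θ * cos (a * θ) = t 0 * cos (a * θ) +
      ∑ d ∈ Icc 1 (m - 1), t d * (cos (((a + d : ℤ) : ℝ) * θ) + cos (((a - d : ℤ) : ℝ) * θ)) := by
  have hcos (d : ℕ) : cos (((a + d : ℤ) : ℝ) * θ) + cos (((a - d : ℤ) : ℝ) * θ)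
      = 2 * cos (a * θ) * cos (d * θ) := by
    push_cast
    rw [add_mul, sub_mul, cos_add, cos_sub]
    ring
  simp only [hcos, bandSymbol, add_mul, sum_mul, mul_sum]
  ring_nf

theorem integral_bandSymbol_mul_cos (a : ℤ) :
    ∫ θ in (0)..(2 * π), bandSymbol m t θ * cos (a * θ) = 2 * π * bandCoeff m t a := by
  have hint (d : ℕ) :
      ∫ θ in (0)..(2 * π), (cos (((a + d : ℤ) : ℝ) * θ) + cos (((a - d : ℤ) : ℝ) * θ))
        = (if a + d = 0 then 2 * π else 0) + (if a - d = 0 then 2 * π else 0) := by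
    rw [intervalIntegral.integral_add, integral_cos_intCast_mul, integral_cos_intCast_mul] <;>
      exact Continuous.intervalIntegrable (by fun_prop) _ _
  have hpair : ∀ d ∈ Icc 1 (m - 1), t d * ((if a + d = 0 then 2 * π else 0) +
      (if a - d = 0 then 2 * π else 0)) = if d = a.natAbs then 2 * π * t d else 0 := by
    intro d hd
    rw [mem_Icc] at hd
    split_ifs <;> first | (exfalso; omega) | ring
  simp_rw [bandSymbol_mul_cos]
  rw [intervalIntegral.integral_add (Continuous.intervalIntegrable (by fun_prop) _ _)
      (Continuous.intervalIntegrable (by fun_prop) _ _),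
    intervalIntegral.integral_finsetSum fun _ _ => Continuous.intervalIntegrable (by fun_prop) _ _]
  simp_rw [intervalIntegral.integral_const_mul, hint, integral_cos_intCast_mul]
  rw [sum_congr rfl hpair, sum_ite_eq', bandCoeff]
  rcases eq_or_ne a 0 with rfl | ha
  · simp [mul_comm]
  · have : a.natAbs ≠ 0 := by omega
    simp [ha, this, Nat.one_le_iff_ne_zero]

theorem integral_bandSymbol_mul_trigNormSq {N : ℕ} (v : Fin N → ℝ) :
    ∫ θ in (0)..(2 * π), bandSymbol m t θ * trigNormSq v θ
      = 2 * π * (v ⬝ᵥ bandToeplitz m N t *ᵥ v) := by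
  rw [integral_mul_trigNormSq (continuous_bandSymbol m t)]
  simp_rw [integral_bandSymbol_mul_cos]
  simp only [dotProduct, mulVec, bandToeplitz_apply, mul_sum]
  exact sum_congr rfl fun j _ => sum_congr rfl fun k _ => by ring

theorem mul_dotProduct_self_le_bandToeplitz {c : ℝ}
    (hc : ∀ θ ∈ Set.Icc 0 (2 * π), c ≤ bandSymbol m t θ) {N : ℕ} (v : Fin N → ℝ) :
    c * (v ⬝ᵥ v) ≤ v ⬝ᵥ bandToeplitz m N t *ᵥ v := by
  have h : ∫ θ in (0)..(2 * π), c * trigNormSq v θ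
      ≤ ∫ θ in (0)..(2 * π), bandSymbol m t θ * trigNormSq v θ :=
    intervalIntegral.integral_mono_on two_pi_pos.le
      ((continuous_const.mul (continuous_trigNormSq v)).intervalIntegrable _ _)
      (((continuous_bandSymbol m t).mul (continuous_trigNormSq v)).intervalIntegrable _ _)
      fun θ hθ => mul_le_mul_of_nonneg_right (hc θ hθ) (trigNormSq_nonneg v θ)
  rw [intervalIntegral.integral_const_mul, integral_trigNormSq,
    integral_bandSymbol_mul_trigNormSq, mul_left_comm] at h
  exact le_of_mul_le_mul_left h two_pi_pos

theorem bandSymbol_eq_sum_Icc_bandCoeff {N : ℕ} (hN : m - 1 ≤ N) (θ : ℝ) :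
    bandSymbol m t θ = bandCoeff m t 0 * cos ((0 : ℤ) * θ)
      + 2 * ∑ d ∈ Icc 1 N, bandCoeff m t d * cos ((d : ℤ) * θ) := by
  have hsub : Icc 1 (m - 1) ⊆ Icc 1 N := Icc_subset_Icc_right hN
  rw [← sum_subset hsub fun d hd hd' => ?_]
  · have h0 : bandCoeff m t 0 = t 0 := by simp [bandCoeff]
    simp only [bandSymbol, h0, Int.cast_zero, zero_mul, cos_zero, mul_one, Int.cast_natCast]
    congr 2
    refine sum_congr rfl fun d hd => ?_
    rw [bandCoeff_natCast, if_pos (mem_Icc.1 hd).2]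
  · simp only [mem_Icc] at hd hd'
    simp [bandCoeff_natCast, show ¬ d ≤ m - 1 by omega]

theorem bandQuadSum_succ {N : ℕ} (hN : m - 1 ≤ N) (θ : ℝ) :
    bandQuadSum m t θ (N + 1) = bandQuadSum m t θ N + bandSymbol m t θ := by
  have hg : (fun a : ℤ => bandCoeff m t a * cos (a * θ)).Even := fun a => by
    simp [bandCoeff_neg]
  rw [bandQuadSum, sum_range_sum_range_succ_of_even hg, nsmul_eq_mul, Nat.cast_ofNat,
    bandSymbol_eq_sum_Icc_bandCoeff m t hN θ]
  rfl

theorem exists_bandQuadSum_eq (θ : ℝ) :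
    ∃ D, ∀ N ≥ m - 1, bandQuadSum m t θ N = N * bandSymbol m t θ + D := by
  refine ⟨bandQuadSum m t θ (m - 1) - (m - 1 : ℕ) * bandSymbol m t θ, fun N hN => ?_⟩
  induction N, hN using Nat.le_induction with
  | base => ring
  | succ N hN ih => rw [bandQuadSum_succ m t hN, ih]; push_cast; ring

theorem mul_card_le_bandQuadSum {N : ℕ} {c : ℝ}
    (hc : ∀ v : Fin N → ℝ, c * (v ⬝ᵥ v) ≤ v ⬝ᵥ bandToeplitz m N t *ᵥ v) (θ : ℝ) :
    c * N ≤ bandQuadSum m t θ N := by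
  have hnorm := cos_dotProduct_add_sin_dotProduct (1 : Matrix (Fin N) (Fin N) ℝ) θ
  have hquad := cos_dotProduct_add_sin_dotProduct (bandToeplitz m N t) θ
  simp only [one_mulVec, one_apply, ite_mul, one_mul, zero_mul, sum_ite_eq, mem_univ,
    if_true, sub_self, Int.cast_zero, cos_zero, sum_const, card_univ,
    Fintype.card_fin, nsmul_eq_mul, mul_one] at hnorm
  have hsum : bandQuadSum m t θ N
      = ∑ j : Fin N, ∑ k : Fin N, bandToeplitz m N t j k * cos (((j : ℤ) - k : ℤ) * θ) := by
    simp only [bandToeplitz_apply]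
    rw [bandQuadSum, ← Fin.sum_univ_eq_sum_range]
    exact sum_congr rfl fun j _ => (Fin.sum_univ_eq_sum_range _ _).symm
  rw [hsum, ← hquad, ← hnorm, mul_add]
  exact add_le_add (hc _) (hc _)

end Band

theorem stmt_5_general (m : ℕ) (t : ℕ → ℝ)
    (lmin : ℕ → ℝ)
    (hlmin : ∀ n : ℕ, lmin n ∈ {r : ℝ | ∃ v : Fin (n + 1) → ℝ, v ≠ 0 ∧
        (bandToeplitz m (n + 1) t).mulVec v = r • v} ∧
      ∀ r ∈ {r : ℝ | ∃ v : Fin (n + 1) → ℝ, v ≠ 0 ∧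
        (bandToeplitz m (n + 1) t).mulVec v = r • v}, lmin n ≤ r) :
    Antitone lmin ∧
    Filter.Tendsto lmin Filter.atTop
      (nhds (sInf ((fun θ : ℝ => t 0 + 2 * ∑ k ∈ Finset.Icc 1 (m - 1),
        t k * Real.cos ((k : ℝ) * θ)) '' Set.Icc 0 (2 * Real.pi)))) := by
  have hray (n : ℕ) (v : Fin (n + 1) → ℝ) :
      lmin n * (v ⬝ᵥ v) ≤ v ⬝ᵥ bandToeplitz m (n + 1) t *ᵥ v :=
    (isHermitian_bandToeplitz m t _).mul_dotProduct_self_le_of_mem_lowerBounds (hlmin n).2 v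
  refine ⟨antitone_nat_of_succ_le fun n => le_of_mem_realEigenvalues (fun v => ?_) (hlmin n).1, ?_⟩
  · rw [← snoc_zero_dotProduct_snoc_zero, ← bandToeplitz_submatrix_castSucc,
      ← dotProduct_mulVec_snoc_zero]
    exact hray (n + 1) _
  obtain ⟨θ₀, -, hsInf, hmin⟩ := isCompact_Icc.exists_sInf_image_eq_and_le
    (Set.nonempty_Icc.2 two_pi_pos.le) (continuous_bandSymbol m t).continuousOn
  obtain ⟨D, hD⟩ := exists_bandQuadSum_eq m t θ₀
  change Tendsto lmin atTop (𝓝 (sInf (bandSymbol m t '' _)))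
  rw [hsInf]
  have hupper : Tendsto (fun n : ℕ => bandSymbol m t θ₀ + D / (n + 1)) atTop
      (𝓝 (bandSymbol m t θ₀)) := by
    simpa [div_eq_mul_inv] using
      (tendsto_one_div_add_atTop_nhds_zero_nat.const_mul D).const_add (bandSymbol m t θ₀)
  refine tendsto_of_tendsto_of_tendsto_of_le_of_le' tendsto_const_nhds hupper
    (Eventually.of_forall fun n =>
      le_of_mem_realEigenvalues (mul_dotProduct_self_le_bandToeplitz m t hmin) (hlmin n).1) ?_
  filter_upwards [eventually_ge_atTop (m - 1)] with n hn
  have h := (mul_card_le_bandQuadSum m t (hray n) θ₀).trans_eq (hD (n + 1) (by omega))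
  push_cast at h
  rw [add_div' _ _ _ (by positivity), le_div_iff₀ (by positivity)]
  linarith

/-- Szegő-type result: the smallest eigenvalue of the banded symmetric Toeplitz
matrices `T_n` is nonincreasing in `n` and converges to the infimum of the
symbol `f(θ) = t_0 + 2 Σ_{k=1}^{m-1} t_k cos(kθ)`. -/
theorem stmt_5 (m : ℕ) (hm : 1 ≤ m) (t : ℕ → ℝ)
    (lmin : ℕ → ℝ)
    (hlmin : ∀ n : ℕ, lmin n ∈ {r : ℝ | ∃ v : Fin (n + 1) → ℝ, v ≠ 0 ∧
        (bandToeplitz m (n + 1) t).mulVec v = r • v} ∧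
      ∀ r ∈ {r : ℝ | ∃ v : Fin (n + 1) → ℝ, v ≠ 0 ∧
        (bandToeplitz m (n + 1) t).mulVec v = r • v}, lmin n ≤ r) :
    Antitone lmin ∧
    Filter.Tendsto lmin Filter.atTop
      (nhds (sInf ((fun θ : ℝ => t 0 + 2 * ∑ k ∈ Finset.Icc 1 (m - 1),
        t k * Real.cos ((k : ℝ) * θ)) '' Set.Icc 0 (2 * Real.pi)))) :=
  stmt_5_general m t lmin hlmin
end

section
/- Let A ∈ ℝ^{n×n}, B ∈ ℝ^{n}, C ∈ ℝ^{1×n}, D ∈ ℝ define the discrete-time system x(t+1) = A x(t) + B w(t), z(t) = C x(t) + D w(t), x(0) = 0. Suppose there exists a symmetric positive definite X with the block matrix [[X − AᵀXA, Cᵀ − AᵀXB], [C − BᵀXA, D + Dᵀ − BᵀXB]] positive semidefinite. Then for every input sequence w and every horizon N, Σ_{t=0}^{N−1} z(t) w(t) ≥ 0, i.e., the system is passive. -/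
/-!
The quadratic form `V x = xᵀ X x` is a storage function. Evaluating the LMI at the vector
`(x(t), w(t))` and expanding `V (A x + w B) - V x` gives the dissipation inequality
`V (x (t + 1)) - V (x t) ≤ 2 z(t) w(t)`. Summing it telescopes, and `V (x 0) = 0 ≤ V (x N)`.
-/

open Finset Matrix

section QuadraticForms

variable {m R : Type*} [Fintype m] [CommRing R]

theorem dotProduct_fromBlocks_unit_mulVec (P : Matrix m m R) (q : m → R) (r : R)
    (u : m → R) (s : R) :
    Sum.elim u (fun _ : Unit => s) ⬝ᵥ
        fromBlocks P (of fun i (_ : Unit) => q i) (of fun (_ : Unit) j => q j)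
          (of fun _ _ => r) *ᵥ Sum.elim u (fun _ => s) =
      u ⬝ᵥ P *ᵥ u + 2 * s * (q ⬝ᵥ u) + r * s ^ 2 := by
  have hcol : (of fun i (_ : Unit) => q i) *ᵥ (fun _ => s) = s • q := by
    ext i; simp [mulVec, dotProduct, mul_comm]
  have hrow : (of fun (_ : Unit) j => q j) *ᵥ u = fun _ => q ⬝ᵥ u := by
    ext; simp [mulVec, dotProduct]
  have hcorner : (of fun (_ _ : Unit) => r) *ᵥ (fun _ => s) = fun _ => r * s := by
    ext; simp [mulVec, dotProduct]
  simp only [dotProduct_block, fromBlocks_mulVec, Sum.elim_comp_inl, Sum.elim_comp_inr,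
    hcol, hrow, hcorner, dotProduct_add, dotProduct_smul, smul_eq_mul]
  rw [dotProduct_comm u q]
  simp only [dotProduct, Finset.univ_unique, Finset.sum_singleton]
  ring

theorem dotProduct_transpose_mul_mulVec (A X : Matrix m m R) (u v : m → R) :
    u ⬝ᵥ (Aᵀ * X) *ᵥ v = (A *ᵥ u) ⬝ᵥ X *ᵥ v := by
  rw [← mulVec_mulVec, dotProduct_mulVec, vecMul_transpose]

theorem Matrix.IsSymm.dotProduct_mulVec_comm {X : Matrix m m R} (hX : X.IsSymm) (u v : m → R) :
    u ⬝ᵥ X *ᵥ v = v ⬝ᵥ X *ᵥ u := by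
  rw [dotProduct_mulVec, dotProduct_comm, ← mulVec_transpose, hX.eq]

theorem Matrix.IsSymm.dotProduct_add_mulVec_add {X : Matrix m m R} (hX : X.IsSymm) (u v : m → R) :
    (u + v) ⬝ᵥ X *ᵥ (u + v) = u ⬝ᵥ X *ᵥ u + 2 * (u ⬝ᵥ X *ᵥ v) + v ⬝ᵥ X *ᵥ v := by
  rw [mulVec_add, dotProduct_add, add_dotProduct, add_dotProduct, hX.dotProduct_mulVec_comm v u]
  ring

end QuadraticForms

theorem sub_le_sum_range_of_succ_sub_le {G : Type*} [AddCommGroup G] [PartialOrder G]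
    [IsOrderedAddMonoid G] {V r : ℕ → G} (h : ∀ t, V (t + 1) - V t ≤ r t) (N : ℕ) :
    V N - V 0 ≤ ∑ t ∈ range N, r t := by
  rw [← sum_range_sub]
  exact sum_le_sum fun t _ => h t

theorem storage_step_le_of_passivity_LMI {m : Type*} [Fintype m] {A X : Matrix m m ℝ}
    {B C : m → ℝ} {D : ℝ} (hX : X.IsSymm)
    (hLMI : (fromBlocks (X - Aᵀ * X * A)
        (of fun i (_ : Unit) => (C - (Aᵀ * X) *ᵥ B) i)
        (of fun (_ : Unit) j => (C - (Aᵀ * X) *ᵥ B) j)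
        (of fun _ _ => D + D - B ⬝ᵥ X *ᵥ B)).PosSemidef)
    (u : m → ℝ) (s : ℝ) :
    (A *ᵥ u + s • B) ⬝ᵥ X *ᵥ (A *ᵥ u + s • B) - u ⬝ᵥ X *ᵥ u ≤
      2 * ((C ⬝ᵥ u + D * s) * s) := by
  have hLMI_at := hLMI.dotProduct_mulVec_nonneg (Sum.elim u fun _ => s)
  rw [star_trivial, dotProduct_fromBlocks_unit_mulVec] at hLMI_at
  have hAXA : u ⬝ᵥ (Aᵀ * X * A) *ᵥ u = (A *ᵥ u) ⬝ᵥ X *ᵥ (A *ᵥ u) := by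
    rw [← mulVec_mulVec, dotProduct_transpose_mul_mulVec]
  have hAXB : ((Aᵀ * X) *ᵥ B) ⬝ᵥ u = (A *ᵥ u) ⬝ᵥ X *ᵥ B := by
    rw [dotProduct_comm, dotProduct_transpose_mul_mulVec]
  rw [sub_mulVec, dotProduct_sub, sub_dotProduct, hAXA, hAXB] at hLMI_at
  rw [hX.dotProduct_add_mulVec_add]
  simp only [mulVec_smul, dotProduct_smul, smul_dotProduct, smul_eq_mul]
  nlinarith [hLMI_at]

/-- Discrete-time KYP lemma (sufficiency): existence of a positive definite
storage matrix `X` satisfying the passivity LMI implies the passivity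
inequality `Σ z(t) w(t) ≥ 0` along every trajectory from `x(0) = 0`. -/
theorem stmt_9 (n : ℕ) (A : Matrix (Fin n) (Fin n) ℝ) (B : Fin n → ℝ)
    (C : Fin n → ℝ) (D : ℝ) (X : Matrix (Fin n) (Fin n) ℝ)
    (hX : X.PosDef)
    (hLMI : (Matrix.fromBlocks
        (X - Aᵀ * X * A)
        (Matrix.of fun (i : Fin n) (_ : Unit) => C i - (Aᵀ * X).mulVec B i)
        (Matrix.of fun (_ : Unit) (j : Fin n) => C j - (Aᵀ * X).mulVec B j)
        (Matrix.of fun (_ _ : Unit) => D + D - B ⬝ᵥ X.mulVec B)).PosSemidef)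
    (w : ℕ → ℝ) (x : ℕ → Fin n → ℝ) (z : ℕ → ℝ)
    (hx0 : x 0 = 0)
    (hx : ∀ t, x (t + 1) = A.mulVec (x t) + w t • B)
    (hz : ∀ t, z t = C ⬝ᵥ x t + D * w t) :
    ∀ N : ℕ, 0 ≤ ∑ t ∈ Finset.range N, z t * w t := by
  intro N
  have hX_symm : X.IsSymm := isHermitian_iff_isSymm.mp hX.isHermitian
  have hdissipation : ∀ t, x (t + 1) ⬝ᵥ X *ᵥ x (t + 1) - x t ⬝ᵥ X *ᵥ x t ≤ 2 * (z t * w t) := by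
    intro t
    rw [hx, hz]
    exact storage_step_le_of_passivity_LMI hX_symm hLMI (x t) (w t)
  have htelescope := sub_le_sum_range_of_succ_sub_le (V := fun t => x t ⬝ᵥ X *ᵥ x t) hdissipation N
  have hVN := hX.posSemidef.dotProduct_mulVec_nonneg (x N)
  rw [← mul_sum, hx0, zero_dotProduct, sub_zero] at htelescope
  rw [star_trivial] at hVN
  linarith
end

section
/- Let P and C be maps from input sequences to output sequences (discrete-time signals in ℓ_2e) that are both passive: for all T, Σ_{t=0}^{T} u(t) y(t) ≥ 0 where y = P(u), and similarly for C. Suppose moreover C is output strictly passive: there is δ > 0 with Σ_{t=0}^{T} e(t) v(t) ≥ δ Σ_{t=0}^{T} v(t)^2 where v = C(e). Then the negative feedback interconnection (standard unity feedback with C in the forward path and P in the loop: e = r − y, u = C(e), y = P(u)) is ℓ_2-stable from r to u. -/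
open Finset

/-- Passivity theorem for the discrete-time negative feedback interconnection
`e = r − y`, `u = C(e)`, `y = P(u)`: if `P` is passive and `C` is output
strictly passive, then the loop is ℓ₂-stable from `r` to `u` with a linear
gain bound. -/
theorem stmt_14 (P C : (ℕ → ℝ) → (ℕ → ℝ))
    (hP : ∀ u : ℕ → ℝ, ∀ T : ℕ, 0 ≤ ∑ t ∈ Finset.range (T + 1), u t * P u t)
    (δ : ℝ) (hδ : 0 < δ)
    (hC : ∀ e : ℕ → ℝ, ∀ T : ℕ,
      δ * ∑ t ∈ Finset.range (T + 1), (C e t) ^ 2 ≤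
        ∑ t ∈ Finset.range (T + 1), e t * C e t) :
    ∃ κ : ℝ, 0 ≤ κ ∧ ∀ r e u y : ℕ → ℝ,
      (∀ t, e t = r t - y t) → u = C e → y = P u →
      ∀ T : ℕ, ∑ t ∈ Finset.range (T + 1), (u t) ^ 2 ≤
        κ * ∑ t ∈ Finset.range (T + 1), (r t) ^ 2 := by
  refine ⟨1 / δ ^ 2, by positivity, ?_⟩
  intro r e u y he hu hy T
  set Su := ∑ t ∈ Finset.range (T + 1), (u t) ^ 2 with hSu
  set Sr := ∑ t ∈ Finset.range (T + 1), (r t) ^ 2 with hSr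
  have h1 : δ * Su ≤ ∑ t ∈ Finset.range (T + 1), e t * u t := by
    have := hC e T
    rw [← hu] at this
    simpa [hSu] using this
  have h2 : ∑ t ∈ Finset.range (T + 1), e t * u t
      = (∑ t ∈ Finset.range (T + 1), r t * u t)
        - ∑ t ∈ Finset.range (T + 1), u t * y t := by
    rw [← Finset.sum_sub_distrib]
    apply Finset.sum_congr rfl
    intro t _
    rw [he t]; ring
  have h3 : 0 ≤ ∑ t ∈ Finset.range (T + 1), u t * y t := by
    have := hP u T
    rw [← hy] at this
    exact this
  have h4 : ∑ t ∈ Finset.range (T + 1), r t * u t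
      ≤ Sr / (2 * δ) + δ / 2 * Su := by
    rw [hSr, hSu, Finset.sum_div, Finset.mul_sum, ← Finset.sum_add_distrib]
    apply Finset.sum_le_sum
    intro t _
    rw [← sub_nonneg]
    have h2d : (0:ℝ) < 2 * δ := by linarith
    have heq : r t ^ 2 / (2 * δ) + δ / 2 * u t ^ 2 - r t * u t
        = (r t - δ * u t) ^ 2 / (2 * δ) := by
      field_simp
      ring
    rw [heq]
    positivity
  have h5 : δ * Su ≤ Sr / (2 * δ) + δ / 2 * Su := by
    calc δ * Su ≤ ∑ t ∈ Finset.range (T + 1), e t * u t := h1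
    _ = _ - _ := h2
    _ ≤ ∑ t ∈ Finset.range (T + 1), r t * u t := by linarith
    _ ≤ _ := h4
  have h6 : δ / 2 * Su ≤ Sr / (2 * δ) := by linarith
  rw [le_div_iff₀ (by positivity : (0:ℝ) < 2 * δ)] at h6
  have hfin : Su ≤ 1 / δ ^ 2 * Sr := by
    rw [div_mul_eq_mul_div, le_div_iff₀ (by positivity : (0:ℝ) < δ ^ 2)]
    nlinarith [h6]
  exact hfin
end
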